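/- arXiv:1309.1272 — 2 statements merged into one kernel-verified Lean document; each statement's English description precedes it below -/
import Mathlib

section
/- The space of labeled generalized Cayley graphs X_{π,Σ} over a finite port set π and finite label set Σ, equipped with the Gromov–Hausdorff–Cantor metric d, is a compact metric space: every sequence of generalized Cayley graphs admits a converging subsequence. -/
/-!  Generalized Cayley graphs (Arrighi–Martiel–Nesme, "Intrinsic universality of
causal graph dynamics").

A word over the alphabet `Π = π × π` describes a path in a port graph: the letter
`(a, b)` means "leave the current vertex through port `a` and enter the next vertex
through port `b`".  -/

/-- A word (path description) over the alphabet `π × π`. -/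
abbrev Word (π : Type) := List (π × π)

/-- A labeled generalized Cayley graph over the port set `π` with vertex labels in `Λ`:
a language `L ⊆ (π × π)*` together with an equivalence relation `rel` on `L`
satisfying prefix-closure, `rel`-congruence, invertibility of edges and port
determinism, and a labeling of the `rel`-classes (encoded as a partial function
`label` on words, defined exactly on `L` and constant on `rel`-classes).
The pointed vertex is the class of the empty word `[]`. -/
structure GCGraph (π : Type) (Λ : Type) where
  /-- the language of paths -/
  L : Set (Word π)
  /-- the equivalence relation `≡_L` (two paths are related iff they lead to the
  same vertex); it only relates members of `L`. -/
  rel : Word π → Word π → Prop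
  /-- the labeling: `label u` is the label of the vertex reached by `u` (it is
  `some _` exactly on `L`). -/
  label : Word π → Option Λ
  eps_mem : ([] : Word π) ∈ L
  rel_refl : ∀ u ∈ L, rel u u
  rel_symm : ∀ {u v}, rel u v → rel v u
  rel_trans : ∀ {u v w}, rel u v → rel v w → rel u w
  rel_mem : ∀ {u v}, rel u v → u ∈ L
  /-- axiom (1): prefix closure. -/
  prefix_closed : ∀ u v : Word π, u ++ v ∈ L → u ∈ L
  /-- axiom (2): congruence of the equivalence relation. -/
  rel_congr : ∀ u u' v : Word π, rel u u' → u ++ v ∈ L →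
      u' ++ v ∈ L ∧ rel (u' ++ v) (u ++ v)
  /-- axiom (3): every edge can be traversed backwards. -/
  edge_inv : ∀ (u : Word π) (a b : π), u ++ [(a, b)] ∈ L →
      u ++ [(a, b), (b, a)] ∈ L ∧ rel (u ++ [(a, b), (b, a)]) u
  /-- axiom (4): port determinism — a vertex cannot be connected to two different
  vertices using the same port. -/
  port_det : ∀ (u u' : Word π) (a b c : π), rel u u' →
      u ++ [(a, b)] ∈ L → u' ++ [(a, c)] ∈ L → b = c
  label_isSome : ∀ u, (label u).isSome ↔ u ∈ L
  label_congr : ∀ {u v}, rel u v → label u = label v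

/-- The raw data of a disk: a language, a relation and a labeling
(the restriction of a generalized Cayley graph to words of bounded length). -/
structure DiskData (π Λ : Type) where
  L : Set (Word π)
  rel : Word π → Word π → Prop
  label : Word π → Option Λ

/-- The disk `X^r` of radius `r` of a generalized Cayley graph: the restriction of
`X` to the words of `L` of length at most `r` (keeping labels). -/
def GCGraph.disk {π Λ : Type} (X : GCGraph π Λ) (r : ℕ) : DiskData π Λ where
  L := {u | u ∈ X.L ∧ u.length ≤ r}
  rel := fun u v => X.rel u v ∧ u.length ≤ r ∧ v.length ≤ r
  label := fun u => if u.length ≤ r then X.label u else none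

/-- The Gromov–Hausdorff–Cantor metric on generalized Cayley graphs:
`d(X, Y) = 0` if `X = Y`, and `d(X, Y) = (1/2)^r` otherwise, where `r` is the
minimal radius such that `X^r ≠ Y^r`. -/
noncomputable def GHCdist {π Λ : Type} (X Y : GCGraph π Λ) : ℝ :=
  letI := Classical.propDecidable (X = Y)
  if X = Y then 0 else (1 / 2 : ℝ) ^ sInf {r : ℕ | X.disk r ≠ Y.disk r}

/-! Tychonoff's theorem, applied to the countable product of finite discrete spaces indexed by
words, gives a subsequence along which the label of every word and the relation between every
pair of words are eventually constant. These eventual values form a generalized Cayley graph,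
because each axiom involves only finitely many words and therefore holds for the limit as soon as
it holds for one term far enough along the subsequence. Since there are only finitely many words
of length at most `r`, the disks of radius `r` then eventually coincide with those of the limit,
which is convergence for the Gromov–Hausdorff–Cantor metric. -/

open Filter Topology

theorem exists_strictMono_forall_eventually_eq {ι β : Type*} [Countable ι] [Finite β]
    (f : ℕ → ι → β) :
    ∃ (g : ι → β) (φ : ℕ → ℕ), StrictMono φ ∧ ∀ i, ∀ᶠ n in atTop, f (φ n) i = g i := by
  let _ : TopologicalSpace β := ⊥
  have : DiscreteTopology β := ⟨rfl⟩
  obtain ⟨g, φ, hφ, hlim⟩ := CompactSpace.tendsto_subseq f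
  refine ⟨g, φ, hφ, fun i => tendsto_pure.mp ?_⟩
  rw [← nhds_discrete]
  exact tendsto_pi_nhds.mp hlim i

namespace GCGraph

variable {π Λ : Type}

theorem ext {X Y : GCGraph π Λ} (hrel : X.rel = Y.rel) (hlabel : X.label = Y.label) :
    X = Y := by
  have hL : X.L = Y.L := Set.ext fun w => by rw [← X.label_isSome, ← Y.label_isSome, hlabel]
  cases X; cases Y
  cases hL; cases hrel; cases hlabel
  rfl

theorem disk_eq_iff {X Y : GCGraph π Λ} {r : ℕ} :
    X.disk r = Y.disk r ↔
      (∀ w : Word π, w.length ≤ r → X.label w = Y.label w) ∧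
      ∀ v w : Word π, v.length ≤ r → w.length ≤ r → (X.rel v w ↔ Y.rel v w) := by
  constructor
  · intro h
    refine ⟨fun w hw => ?_, fun v w hv hw => ?_⟩
    · simpa [disk, hw] using congrFun (congrArg DiskData.label h) w
    · simpa [disk, hv, hw] using congrFun₂ (congrArg DiskData.rel h) v w
  · rintro ⟨hlabel, hrel⟩
    simp only [disk, DiskData.mk.injEq]
    refine ⟨Set.ext fun w => and_congr_left fun hw => ?_,
      funext₂ fun v w => propext (and_congr_left fun ⟨hv, hw⟩ => hrel v w hv hw),
      funext fun w => by split_ifs with hw <;> simp [hlabel w, hw]⟩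
    rw [← X.label_isSome, ← Y.label_isSome, hlabel w hw]

theorem disk_eq_of_le {X Y : GCGraph π Λ} {r s : ℕ} (h : X.disk r = Y.disk r) (hs : s ≤ r) :
    X.disk s = Y.disk s :=
  disk_eq_iff.2 ⟨fun w hw => (disk_eq_iff.1 h).1 w (hw.trans hs),
    fun v w hv hw => (disk_eq_iff.1 h).2 v w (hv.trans hs) (hw.trans hs)⟩

theorem eq_of_forall_disk_eq {X Y : GCGraph π Λ} (h : ∀ r, X.disk r = Y.disk r) : X = Y :=
  ext (funext₂ fun v w => propext <| (disk_eq_iff.1 (h (max v.length w.length))).2 v w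
      (le_max_left _ _) (le_max_right _ _))
    (funext fun w => (disk_eq_iff.1 (h w.length)).1 w le_rfl)

end GCGraph

theorem GHCdist_nonneg {π Λ : Type} (X Y : GCGraph π Λ) : 0 ≤ GHCdist X Y := by
  unfold GHCdist
  split_ifs <;> positivity

theorem GHCdist_le_of_disk_eq {π Λ : Type} {X Y : GCGraph π Λ} {r : ℕ}
    (h : X.disk r = Y.disk r) : GHCdist X Y ≤ (1 / 2 : ℝ) ^ (r + 1) := by
  unfold GHCdist
  split_ifs with hXY
  · positivity
  · have hne : {s | X.disk s ≠ Y.disk s}.Nonempty :=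
      not_forall.mp (mt GCGraph.eq_of_forall_disk_eq hXY)
    have hr : r < sInf {s | X.disk s ≠ Y.disk s} := by
      by_contra! hle
      exact Nat.sInf_mem hne (GCGraph.disk_eq_of_le h hle)
    exact pow_le_pow_of_le_one (by norm_num) (by norm_num) hr

theorem tendsto_GHCdist_zero_of_eventually_disk_eq {π Λ ι : Type} {l : Filter ι}
    {u : ι → GCGraph π Λ} {X : GCGraph π Λ} (h : ∀ r, ∀ᶠ n in l, (u n).disk r = X.disk r) :
    Tendsto (fun n => GHCdist (u n) X) l (𝓝 0) := by
  refine Metric.tendsto_nhds.2 fun ε hε => ?_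
  obtain ⟨r, hr⟩ := exists_pow_lt_of_lt_one hε (by norm_num : (1 / 2 : ℝ) < 1)
  filter_upwards [h r] with n hn
  rw [Real.dist_0_eq_abs, abs_of_nonneg (GHCdist_nonneg _ _)]
  calc GHCdist (u n) X ≤ (1 / 2 : ℝ) ^ (r + 1) := GHCdist_le_of_disk_eq hn
    _ ≤ (1 / 2 : ℝ) ^ r := pow_le_pow_of_le_one (by norm_num) (by norm_num) r.le_succ
    _ < ε := hr

namespace GCGraph

section EventualLimit

variable {π Λ ι : Type} {l : Filter ι} (u : ι → GCGraph π Λ)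
  (R : Word π → Word π → Prop) (lab : Word π → Option Λ)

theorem eventually_mem_L_iff (hlab : ∀ w, ∀ᶠ n in l, (u n).label w = lab w) (w : Word π) :
    ∀ᶠ n in l, w ∈ (u n).L ↔ (lab w).isSome := by
  filter_upwards [hlab w] with n hn
  rw [← hn, label_isSome]

def eventualLimit [l.NeBot] (hR : ∀ v w, ∀ᶠ n in l, (u n).rel v w = R v w)
    (hlab : ∀ w, ∀ᶠ n in l, (u n).label w = lab w) : GCGraph π Λ where
  L := {w | (lab w).isSome}
  rel := R
  label := lab
  eps_mem := by
    obtain ⟨n, hn⟩ := (eventually_mem_L_iff u lab hlab []).exists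
    exact hn.mp (u n).eps_mem
  rel_refl w hw := by
    obtain ⟨n, hm, hr⟩ := ((eventually_mem_L_iff u lab hlab w).and (hR w w)).exists
    exact hr.mp ((u n).rel_refl w (hm.mpr hw))
  rel_symm {v w} h := by
    obtain ⟨n, h₁, h₂⟩ := ((hR v w).and (hR w v)).exists
    exact h₂.mp ((u n).rel_symm (h₁.mpr h))
  rel_trans {v w x} h h' := by
    obtain ⟨n, h₁, h₂, h₃⟩ := ((hR v w).and ((hR w x).and (hR v x))).exists
    exact h₃.mp ((u n).rel_trans (h₁.mpr h) (h₂.mpr h'))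
  rel_mem {v w} h := by
    obtain ⟨n, hr, hm⟩ := ((hR v w).and (eventually_mem_L_iff u lab hlab v)).exists
    exact hm.mp ((u n).rel_mem (hr.mpr h))
  prefix_closed v w h := by
    obtain ⟨n, h₁, h₂⟩ := ((eventually_mem_L_iff u lab hlab (v ++ w)).and
      (eventually_mem_L_iff u lab hlab v)).exists
    exact h₂.mp ((u n).prefix_closed v w (h₁.mpr h))
  rel_congr v v' w h hm := by
    obtain ⟨n, h₁, h₂, h₃, h₄⟩ := ((hR v v').and ((eventually_mem_L_iff u lab hlab (v ++ w)).and
      ((eventually_mem_L_iff u lab hlab (v' ++ w)).and (hR (v' ++ w) (v ++ w))))).exists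
    have := (u n).rel_congr v v' w (h₁.mpr h) (h₂.mpr hm)
    exact ⟨h₃.mp this.1, h₄.mp this.2⟩
  edge_inv w a b h := by
    obtain ⟨n, h₁, h₂, h₃⟩ := ((eventually_mem_L_iff u lab hlab (w ++ [(a, b)])).and
      ((eventually_mem_L_iff u lab hlab (w ++ [(a, b), (b, a)])).and
        (hR (w ++ [(a, b), (b, a)]) w))).exists
    have := (u n).edge_inv w a b (h₁.mpr h)
    exact ⟨h₂.mp this.1, h₃.mp this.2⟩
  port_det v v' a b c h hb hc := by
    obtain ⟨n, h₁, h₂, h₃⟩ := ((hR v v').and ((eventually_mem_L_iff u lab hlab (v ++ [(a, b)])).and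
      (eventually_mem_L_iff u lab hlab (v' ++ [(a, c)])))).exists
    exact (u n).port_det v v' a b c (h₁.mpr h) (h₂.mpr hb) (h₃.mpr hc)
  label_isSome _ := Iff.rfl
  label_congr {v w} h := by
    obtain ⟨n, h₁, h₂, h₃⟩ := ((hR v w).and ((hlab v).and (hlab w))).exists
    rw [← h₂, ← h₃]
    exact (u n).label_congr (h₁.mpr h)

theorem eventually_disk_eq_eventualLimit [l.NeBot] [Finite π]
    (hR : ∀ v w, ∀ᶠ n in l, (u n).rel v w = R v w)
    (hlab : ∀ w, ∀ᶠ n in l, (u n).label w = lab w) (r : ℕ) :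
    ∀ᶠ n in l, (u n).disk r = (eventualLimit u R lab hR hlab).disk r := by
  have hfin := List.finite_length_le (π × π) r
  filter_upwards [hfin.eventually_all.2 fun w _ => hlab w,
    (hfin.prod hfin).eventually_all.2 fun p _ => hR p.1 p.2] with n hlab' hR'
  exact disk_eq_iff.2 ⟨fun w hw => hlab' w hw, fun v w hv hw => (hR' (v, w) ⟨hv, hw⟩).to_iff⟩

end EventualLimit

end GCGraph

/-- **Compactness** (Lemma 1).  The space `X_{π,Σ}` of labeled generalized Cayley
graphs over the finite port set `π = {1, …, d}` and a finite label set `Σ`,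
equipped with the Gromov–Hausdorff–Cantor metric, is a compact metric space:
every sequence of generalized Cayley graphs admits a converging subsequence. -/
theorem GCGraph.sequentially_compact {d : ℕ} {Λ : Type} [Fintype Λ]
    (u : ℕ → GCGraph (Fin d) Λ) :
    ∃ (X : GCGraph (Fin d) Λ) (φ : ℕ → ℕ), StrictMono φ ∧
      Filter.Tendsto (fun n => GHCdist (u (φ n)) X) Filter.atTop (nhds (0 : ℝ)) := by
  obtain ⟨lab, φ₁, hφ₁, hlab⟩ := exists_strictMono_forall_eventually_eq fun n => (u n).label
  -- `Prop` is a finite type, so the relation itself is a function to a finite type.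
  obtain ⟨R, φ₂, hφ₂, hR⟩ := exists_strictMono_forall_eventually_eq
    fun n (p : Word (Fin d) × Word (Fin d)) => (u (φ₁ n)).rel p.1 p.2
  have hlab' : ∀ w, ∀ᶠ n in atTop, (u (φ₁ (φ₂ n))).label w = lab w :=
    fun w => hφ₂.tendsto_atTop.eventually (hlab w)
  let X := eventualLimit (fun n => u (φ₁ (φ₂ n))) (fun v w => R (v, w)) lab
    (fun v w => hR (v, w)) hlab'
  exact ⟨X, φ₁ ∘ φ₂, hφ₁.comp hφ₂, tendsto_GHCdist_zero_of_eventually_disk_eq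
    (eventually_disk_eq_eventualLimit _ _ _ _ _)⟩
end

section
/- In any generalized Cayley graph (L, ≡_L), every path admits an inverse: for every word u = (a₁b₁).(a₂b₂)…(a_nb_n) ∈ L, the reversed word ū = (b_na_n)…(b₂a₂).(b₁a₁) satisfies u.ū ∈ L and u.ū ≡_L ε. -/
/-! Peel off the last letter `(a, b)` of `u = v.(a, b)`: then `u.ū = v.(a, b).(b, a).v̄`,
the backtrack `(a, b).(b, a)` returns to the endpoint of `v` by axiom (3), and congruence (2)
carries this along `v̄`, reducing the claim to the one for `v`. -/

namespace GCGraph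

variable {π Λ : Type} (X : GCGraph π Λ)

theorem backtrack_append {u w : Word π} {a b : π} (hab : u ++ [(a, b)] ∈ X.L)
    (hw : u ++ w ∈ X.L) :
    u ++ [(a, b), (b, a)] ++ w ∈ X.L ∧ X.rel (u ++ [(a, b), (b, a)] ++ w) (u ++ w) :=
  X.rel_congr u _ w (X.rel_symm (X.edge_inv u a b hab).2) hw

end GCGraph

/-- In any generalized Cayley graph `(L, ≡_L)` every path admits an inverse: for
every word `u = (a₁b₁).(a₂b₂)…(a_nb_n) ∈ L`, the reversed word
`ū = (b_na_n)…(b₂a₂).(b₁a₁)` satisfies `u.ū ∈ L` and `u.ū ≡_L ε`. -/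
theorem path_inverse {π Λ : Type} (X : GCGraph π Λ) (u : Word π) (hu : u ∈ X.L) :
    u ++ (u.reverse.map Prod.swap) ∈ X.L ∧
      X.rel (u ++ u.reverse.map Prod.swap) ([] : Word π) := by
  induction u using List.reverseRecOn with
  | nil => exact ⟨X.eps_mem, X.rel_refl [] X.eps_mem⟩
  | append_singleton v e ih =>
    obtain ⟨a, b⟩ := e
    obtain ⟨hv_mem, hv_rel⟩ := ih (X.prefix_closed v [(a, b)] hu)
    have hword : v ++ [(a, b)] ++ (v ++ [(a, b)]).reverse.map Prod.swap
        = v ++ [(a, b), (b, a)] ++ v.reverse.map Prod.swap := by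
      simp
    obtain ⟨hmem, hrel⟩ := X.backtrack_append hu hv_mem
    rw [hword]
    exact ⟨hmem, X.rel_trans hrel hv_rel⟩
end
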